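/- Let a ≤ n be positive integers and let f: {0,1}^n → {0,1} be the conjunction of the first a coordinates, i.e. f(x) = 1 if and only if x_1 = x_2 = ⋯ = x_a = 1. Then f is an a-self-bounding function, ‖f‖_1 = 2^{−a}, and ‖f‖_∞ = 1; in particular ‖f‖_∞ = 2^a · ‖f‖_1, so the factor 3^a in the comparison ‖f‖_∞ ≤ 3^a‖f‖_1 for a-self-bounding functions cannot be improved below 2^a. -/

import Mathlib

noncomputable section

/-- A function `f : {0,1}^n → ℝ` is `a`-self-bounding. -/
def SelfBounding (n : ℕ) (a : ℝ) (f : (Fin n → Bool) → ℝ) : Prop :=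
  ∀ x : Fin n → Bool,
    (∀ i : Fin n,
      f x - min (f (Function.update x i false)) (f (Function.update x i true)) ≤ 1) ∧
    ∑ i : Fin n,
      (f x - min (f (Function.update x i false)) (f (Function.update x i true))) ≤ a * f x

/-- Expectation with respect to the uniform distribution on `{0,1}^n`. -/
def expect (n : ℕ) (g : (Fin n → Bool) → ℝ) : ℝ :=
  (∑ x : Fin n → Bool, g x) / 2 ^ n


/-! The conjunction is `a`-self-bounding because flipping a coordinate can only lower it from `1`
to `0`, and only at its `a` relevant coordinates: every drop `f x - min (f x_{i←0}) (f x_{i←1})`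
equals `f x` for `i` among them and `0` otherwise. It takes the value `1` on exactly
`2^(n-a)` of the `2^n` points, so `‖f‖_1 = 2^{-a}` while `‖f‖_∞ = 1`. -/

section Conjunction

variable {ι : Type*} [Fintype ι] [DecidableEq ι]

def conjunction (S : Finset ι) (x : ι → Bool) : ℝ :=
  if ∀ i ∈ S, x i = true then 1 else 0

theorem conjunction_nonneg (S : Finset ι) (x : ι → Bool) : 0 ≤ conjunction S x := by
  unfold conjunction; split <;> norm_num

theorem conjunction_le_one (S : Finset ι) (x : ι → Bool) : conjunction S x ≤ 1 := by
  unfold conjunction; split <;> norm_num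

theorem conjunction_update_false_of_mem {S : Finset ι} {i : ι} (hi : i ∈ S) (x : ι → Bool) :
    conjunction S (Function.update x i false) = 0 :=
  if_neg fun h => by simpa using h i hi

theorem conjunction_update_of_notMem {S : Finset ι} {i : ι} (hi : i ∉ S) (x : ι → Bool)
    (b : Bool) : conjunction S (Function.update x i b) = conjunction S x :=
  if_congr (forall₂_congr fun j hj => by
    rw [Function.update_of_ne (ne_of_mem_of_not_mem hj hi)]) rfl rfl

theorem conjunction_sub_min_update (S : Finset ι) (x : ι → Bool) (i : ι) :
    conjunction S x - min (conjunction S (Function.update x i false))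
        (conjunction S (Function.update x i true)) = if i ∈ S then conjunction S x else 0 := by
  split_ifs with hi
  · rw [conjunction_update_false_of_mem hi,
      min_eq_left (conjunction_nonneg S _), sub_zero]
  · rw [conjunction_update_of_notMem hi, conjunction_update_of_notMem hi, min_self, sub_self]

theorem sum_conjunction (S : Finset ι) :
    ∑ x : ι → Bool, conjunction S x = 2 ^ (Fintype.card ι - S.card) := by
  have hfilter : (Finset.univ.filter fun x : ι → Bool => ∀ i ∈ S, x i = true) =
      Fintype.piFinset fun i => if i ∈ S then {true} else Finset.univ := by
    ext x
    simp only [Finset.mem_filter, Finset.mem_univ, true_and, Fintype.mem_piFinset]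
    refine ⟨fun h i => ?_, fun h i hi => by simpa [hi] using h i⟩
    split_ifs with hi
    exacts [Finset.mem_singleton.2 (h i hi), Finset.mem_univ _]
  simp only [conjunction]
  rw [Finset.sum_boole, hfilter, Fintype.card_piFinset]
  simp [apply_ite Finset.card, Finset.prod_ite, Finset.filter_not, Finset.card_sdiff_of_subset]

theorem expect_conjunction {n : ℕ} (S : Finset (Fin n)) :
    expect n (conjunction S) = ((2 : ℝ) ^ S.card)⁻¹ := by
  have hS : S.card ≤ n := by simpa using S.card_le_univ
  rw [expect, sum_conjunction, Fintype.card_fin, div_eq_iff (by positivity),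
    pow_sub₀ _ two_ne_zero hS, mul_comm]

theorem iSup_conjunction (S : Finset ι) : ⨆ x : ι → Bool, conjunction S x = 1 := by
  refine le_antisymm (ciSup_le (conjunction_le_one S)) ?_
  calc (1 : ℝ) = conjunction S fun _ => true := (if_pos fun _ _ => rfl).symm
    _ ≤ ⨆ x, conjunction S x := le_ciSup (Set.finite_range _).bddAbove _

theorem selfBounding_conjunction {n : ℕ} (S : Finset (Fin n)) :
    SelfBounding n S.card (conjunction S) := by
  intro x
  simp only [conjunction_sub_min_update]
  refine ⟨fun i => ?_, ?_⟩
  · split_ifs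
    exacts [conjunction_le_one S x, zero_le_one]
  · rw [← Finset.sum_filter, Finset.filter_mem_eq_inter, Finset.univ_inter, Finset.sum_const,
      nsmul_eq_mul]

end Conjunction

theorem conjunction_norm_gap_general (n a : ℕ) (han : a ≤ n)
    (f : (Fin n → Bool) → ℝ)
    (hf : ∀ x, f x = if ∀ i : Fin n, (i : ℕ) < a → x i = true then 1 else 0) :
    SelfBounding n (a : ℝ) f ∧
      expect n (fun x => |f x|) = ((2 : ℝ) ^ a)⁻¹ ∧
      (⨆ x : Fin n → Bool, |f x|) = 1 ∧
      (⨆ x : Fin n → Bool, |f x|) = 2 ^ a * expect n (fun x => |f x|) := by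
  set S : Finset (Fin n) := Finset.univ.filter fun i => (i : ℕ) < a
  have hS : S.card = a := by simpa [S, Fin.card_filter_val_lt] using han
  have hfS : f = conjunction S := funext fun x => by simp [hf, conjunction, S]
  have habs : (fun x => |f x|) = conjunction S :=
    funext fun x => by rw [hfS, abs_of_nonneg (conjunction_nonneg S x)]
  have hexp : expect n (fun x => |f x|) = ((2 : ℝ) ^ a)⁻¹ := by
    rw [habs, expect_conjunction, hS]
  have hsup : (⨆ x, |f x|) = 1 := by rw [habs, iSup_conjunction]
  refine ⟨hfS ▸ hS ▸ selfBounding_conjunction S, hexp, hsup, ?_⟩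
  rw [hsup, hexp, mul_inv_cancel₀ (by positivity)]

theorem conjunction_norm_gap (n a : ℕ) (ha : 1 ≤ a) (han : a ≤ n)
    (f : (Fin n → Bool) → ℝ)
    (hf : ∀ x, f x = if ∀ i : Fin n, (i : ℕ) < a → x i = true then 1 else 0) :
    SelfBounding n (a : ℝ) f ∧
      expect n (fun x => |f x|) = ((2 : ℝ) ^ a)⁻¹ ∧
      (⨆ x : Fin n → Bool, |f x|) = 1 ∧
      (⨆ x : Fin n → Bool, |f x|) = 2 ^ a * expect n (fun x => |f x|) :=
  conjunction_norm_gap_general n a han f hf
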